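/- Let E1, E2 be vector spaces over division rings, with P(Eᵢ) the lattice of all subspaces of Eᵢ, and let g : P(E1) → P(E2) preserve arbitrary joins and send atoms (one-dimensional subspaces) to atoms or 0. If the restriction of g has the property that preimages of atom-sets of elements are closed (as in the lattice setting of pairs of dual spaces, i.e. g is induced from a morphism between the lattices L_{F₁}(E1) and L_{F₂}(E2) of a pair of dual spaces) and the image of g has length ≥ 3, then g is induced by a semilinear map f : E1 → E2, i.e. g(Kv) = K f(v) for every v ∈ E1. -/
import Mathlib

namespace FTPG

open Submodule

variable {K V : Type*} [DivisionRing K] [AddCommGroup V] [Module K V]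

theorem smul_cancel0 {c : K} {v : V} (hc : c ≠ 0) (h : c • v = 0) : v = 0 := by
  have := congrArg (fun w => c⁻¹ • w) h
  simpa [smul_smul, inv_mul_cancel₀ hc] using this

theorem spanEq {v w : V} (h : w ∈ span K {v}) (h0 : w ≠ 0) : span K {w} = span K {v} := by
  rcases mem_span_singleton.1 h with ⟨c, rfl⟩
  have hc : c ≠ 0 := fun hc => h0 (by simp [hc])
  exact span_singleton_smul_eq (IsUnit.mk0 c hc) v

theorem flipMem {v w : V} (h : w ∈ span K {v}) (h0 : w ≠ 0) : v ∈ span K {w} := by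
  rw [spanEq h h0]; exact mem_span_singleton_self v

theorem span_neg_single (x : V) : span K {-x} = span K {x} := by
  apply le_antisymm <;> rw [span_singleton_le_iff_mem]
  · exact neg_mem (mem_span_singleton_self x)
  · simpa using neg_mem (mem_span_singleton_self (-x))

theorem sup_span_pair (u v : V) : span K {u} ⊔ span K {v} = span K {u, v} :=
  (span_insert u {v}).symm

theorem spanPairLe {u v : V} {U : Submodule K V} (hu : u ∈ U) (hv : v ∈ U) :
    span K {u, v} ≤ U := by
  rw [span_le]; rintro w (rfl | rfl) <;> assumption

variable (K) in
/-- Independence of a pair. -/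
def Indep2 (v₁ v₂ : V) : Prop := ∀ s t : K, s • v₁ + t • v₂ = 0 → s = 0 ∧ t = 0

variable (K) in
/-- Independence of a triple. -/
def Indep3 (v₁ v₂ v₃ : V) : Prop :=
  ∀ s t r : K, s • v₁ + t • v₂ + r • v₃ = 0 → s = 0 ∧ t = 0 ∧ r = 0

theorem Indep2.mk' {v₁ v₂ : V} (h1 : v₁ ≠ 0) (h2 : v₂ ∉ span K {v₁}) : Indep2 K v₁ v₂ := by
  intro s t h
  have ht : t = 0 := by
    by_contra ht
    apply h2
    have : v₂ = (-(t⁻¹ * s)) • v₁ := by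
      have := congrArg (fun w => t⁻¹ • w) h
      simp only [smul_add, smul_smul, inv_mul_cancel₀ ht, smul_zero, one_smul] at this
      have h2 := congrArg (fun w => w - (t⁻¹ * s) • v₁) this
      simp only [add_sub_cancel_left, zero_sub] at h2
      rw [h2, neg_smul]
    exact this ▸ mem_span_singleton.2 ⟨_, rfl⟩
  refine ⟨?_, ht⟩
  rw [ht, zero_smul, add_zero] at h
  by_contra hs
  exact h1 (smul_cancel0 hs h)

theorem Indep3.mk' {v₁ v₂ v₃ : V} (h1 : v₁ ≠ 0) (h2 : v₂ ∉ span K {v₁})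
    (h3 : v₃ ∉ span K {v₁, v₂}) : Indep3 K v₁ v₂ v₃ := by
  intro s t r h
  have hr : r = 0 := by
    by_contra hr
    apply h3
    have := congrArg (fun w => r⁻¹ • w) h
    simp only [smul_add, smul_smul, inv_mul_cancel₀ hr, smul_zero, one_smul] at this
    have h5 : v₃ = (-(r⁻¹ * s)) • v₁ + (-(r⁻¹ * t)) • v₂ := by
      rw [neg_smul, neg_smul, ← neg_add, eq_neg_iff_add_eq_zero, add_comm]
      exact this
    exact h5 ▸ mem_span_pair.2 ⟨_, _, rfl⟩
  rw [hr, zero_smul, add_zero] at h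
  rcases Indep2.mk' h1 h2 s t h with ⟨hs, ht⟩
  exact ⟨hs, ht, hr⟩

namespace Indep2
variable {v₁ v₂ : V} (h : Indep2 K v₁ v₂)
include h

theorem ne₁ : v₁ ≠ 0 := fun h0 => by
  simpa using (h 1 0 (by simp [h0])).1

theorem ne₂ : v₂ ≠ 0 := fun h0 => by
  simpa using (h 0 1 (by simp [h0])).2

theorem add_ne : v₁ + v₂ ≠ 0 := fun h0 => by
  simpa using (h 1 1 (by simpa using h0)).1

theorem notMem₂₁ : v₂ ∉ span K {v₁} := by
  intro hm
  rcases mem_span_singleton.1 hm with ⟨c, hc⟩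
  have := h c (-1) (by rw [← hc]; simp)
  simpa using this.2

theorem notMem₁₂ : v₁ ∉ span K {v₂} := by
  intro hm
  rcases mem_span_singleton.1 hm with ⟨c, hc⟩
  have := h (-1) c (by rw [← hc]; simp)
  simpa using this.1

theorem coeff_eq {s t s' t' : K} (he : s • v₁ + t • v₂ = s' • v₁ + t' • v₂) :
    s = s' ∧ t = t' := by
  have h0 : (s - s') • v₁ + (t - t') • v₂ = 0 := by
    have h1 : (s - s') • v₁ + (t - t') • v₂ = (s • v₁ + t • v₂) - (s' • v₁ + t' • v₂) := by
      rw [sub_smul, sub_smul]; abel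
    rw [h1, he, sub_self]
  have := h _ _ h0
  constructor <;> [exact sub_eq_zero.1 this.1; exact sub_eq_zero.1 this.2]

end Indep2

namespace Indep3
variable {v₁ v₂ v₃ : V} (h : Indep3 K v₁ v₂ v₃)
include h

theorem i12 : Indep2 K v₁ v₂ := fun s t he => by
  have := h s t 0 (by simpa using he); exact ⟨this.1, this.2.1⟩

theorem i13 : Indep2 K v₁ v₃ := fun s t he => by
  have := h s 0 t (by simpa using he); exact ⟨this.1, this.2.2⟩

theorem i23 : Indep2 K v₂ v₃ := fun s t he => by
  have := h 0 s t (by simpa using he); exact ⟨this.2.1, this.2.2⟩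

theorem sum_ne : v₁ + v₂ + v₃ ≠ 0 := fun h0 => by
  simpa using (h 1 1 1 (by simpa using h0)).1

theorem notMem₃_span12 : v₃ ∉ span K {v₁, v₂} := by
  intro hm
  rcases mem_span_pair.1 hm with ⟨s, t, hst⟩
  have := h s t (-1) (by rw [← hst]; simp only [neg_one_smul]; abel)
  simpa using this.2.2

theorem notMem₃_sum12 : v₃ ∉ span K {v₁ + v₂} := by
  intro hm
  rcases mem_span_singleton.1 hm with ⟨c, hc⟩
  have := h c c (-1) (by
    rw [smul_add] at hc; rw [← hc]; simp only [neg_one_smul]; abel)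
  simpa using this.2.2

theorem notMem₂_sum13 : v₂ ∉ span K {v₁ + v₃} := by
  intro hm
  rcases mem_span_singleton.1 hm with ⟨c, hc⟩
  have := h c (-1) c (by
    rw [smul_add] at hc
    rw [neg_one_smul, ← hc]; abel)
  simpa using this.2.1

theorem coeff_eq {s t r s' t' r' : K}
    (he : s • v₁ + t • v₂ + r • v₃ = s' • v₁ + t' • v₂ + r' • v₃) :
    s = s' ∧ t = t' ∧ r = r' := by
  have h0 : (s - s') • v₁ + (t - t') • v₂ + (r - r') • v₃ = 0 := by
    have h1 : (s - s') • v₁ + (t - t') • v₂ + (r - r') • v₃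
        = (s • v₁ + t • v₂ + r • v₃) - (s' • v₁ + t' • v₂ + r' • v₃) := by
      rw [sub_smul, sub_smul, sub_smul]; abel
    rw [h1, he, sub_self]
  have := h _ _ _ h0
  exact ⟨sub_eq_zero.1 this.1, sub_eq_zero.1 this.2.1, sub_eq_zero.1 this.2.2⟩

end Indep3

theorem twoSpanLe {v₁ v₂ w₁ w₂ : V} (h1 : w₁ ∈ span K {v₁, v₂}) (h2 : w₂ ∈ span K {v₁, v₂})
    (hw1 : w₁ ≠ 0) (hw2 : w₂ ∉ span K {w₁}) : span K {v₁, v₂} ≤ span K {w₁, w₂} := by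
  rcases mem_span_pair.1 h1 with ⟨a₁, a₂, ha⟩
  rcases mem_span_pair.1 h2 with ⟨b₁, b₂, hb⟩
  have hsp : w₁ ∈ span K {w₁, w₂} := subset_span (by simp)
  have hsp2 : w₂ ∈ span K {w₁, w₂} := subset_span (by simp)
  by_cases ha1 : a₁ = 0
  · -- w₁ = a₂ • v₂ with a₂ ≠ 0
    rw [ha1, zero_smul, zero_add] at ha
    have ha2 : a₂ ≠ 0 := fun h0 => hw1 (by rw [← ha, h0, zero_smul])
    have hv2 : v₂ ∈ span K {w₁, w₂} := by
      have : v₂ = a₂⁻¹ • w₁ := by rw [← ha, smul_smul, inv_mul_cancel₀ ha2, one_smul]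
      rw [this]; exact smul_mem _ _ hsp
    have hb1 : b₁ ≠ 0 := by
      intro h0
      apply hw2
      rw [h0, zero_smul, zero_add] at hb
      rw [← hb, ← ha]
      exact mem_span_singleton.2 ⟨b₂ * a₂⁻¹,
        by rw [smul_smul, mul_assoc, inv_mul_cancel₀ ha2, mul_one]⟩
    have hv1 : v₁ ∈ span K {w₁, w₂} := by
      have : v₁ = b₁⁻¹ • (w₂ - b₂ • v₂) := by
        rw [← hb]; rw [add_sub_cancel_right, smul_smul, inv_mul_cancel₀ hb1, one_smul]
      rw [this]
      exact smul_mem _ _ (sub_mem hsp2 (smul_mem _ _ hv2))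
    exact spanPairLe hv1 hv2
  · -- a₁ ≠ 0
    have key : w₂ - (b₁ * a₁⁻¹) • w₁ = (b₂ - b₁ * a₁⁻¹ * a₂) • v₂ := by
      rw [← hb, ← ha]
      rw [smul_add, smul_smul, smul_smul, mul_assoc b₁ a₁⁻¹ a₁, inv_mul_cancel₀ ha1, mul_one,
        sub_smul]
      abel
    have hc : b₂ - b₁ * a₁⁻¹ * a₂ ≠ 0 := by
      intro h0
      apply hw2
      rw [h0, zero_smul] at key
      have : w₂ = (b₁ * a₁⁻¹) • w₁ := by
        have := congrArg (fun w => w + (b₁ * a₁⁻¹) • w₁) key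
        simpa using this
      exact this ▸ mem_span_singleton.2 ⟨_, rfl⟩
    have hv2 : v₂ ∈ span K {w₁, w₂} := by
      have : v₂ = (b₂ - b₁ * a₁⁻¹ * a₂)⁻¹ • (w₂ - (b₁ * a₁⁻¹) • w₁) := by
        rw [key, smul_smul, inv_mul_cancel₀ hc, one_smul]
      rw [this]
      exact smul_mem _ _ (sub_mem hsp2 (smul_mem _ _ hsp))
    have hv1 : v₁ ∈ span K {w₁, w₂} := by
      have : v₁ = a₁⁻¹ • (w₁ - a₂ • v₂) := by
        rw [← ha, add_sub_cancel_right, smul_smul, inv_mul_cancel₀ ha1, one_smul]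
      rw [this]
      exact smul_mem _ _ (sub_mem hsp (smul_mem _ _ hv2))
    exact spanPairLe hv1 hv2


theorem mem_pair_add (y z : V) : y + z ∈ span K {y, z} :=
  mem_span_pair.2 ⟨1, 1, by simp⟩

theorem mem_pair_sub (y z : V) : y - z ∈ span K {y, z} :=
  mem_span_pair.2 ⟨1, -1, by simp [sub_eq_add_neg]⟩

theorem span_pair_left (u v : V) : span K {u} ≤ span K {u, v} :=
  span_mono (Set.singleton_subset_iff.2 (by simp))

theorem span_pair_right (u v : V) : span K {v} ≤ span K {u, v} :=
  span_mono (Set.singleton_subset_iff.2 (by simp))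

theorem memTrans {w v : V} {U : Submodule K V} (h : w ∈ span K {v}) (hv : v ∈ U) : w ∈ U := by
  rcases mem_span_singleton.1 h with ⟨d, rfl⟩
  exact U.smul_mem d hv

/-- If `z` is off the "line" spanned by `p, q`, while `w, u` are on it and `w ∉ ⟨u⟩`,
then `w` is off the line spanned by `z, u`. -/
theorem notMem_span_aux {p q z u w : V} (hzS : z ∉ span K {p, q}) (hwS : w ∈ span K {p, q})
    (huS : u ∈ span K {p, q}) (hwu : w ∉ span K {u}) : w ∉ span K {z, u} := by
  intro hm
  rcases mem_span_pair.1 hm with ⟨s, t, hst⟩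
  by_cases hs : s = 0
  · rw [hs, zero_smul, zero_add] at hst
    exact hwu (hst ▸ mem_span_singleton.2 ⟨t, rfl⟩)
  · apply hzS
    have : z = s⁻¹ • (w - t • u) := by
      rw [← hst, add_sub_cancel_right, smul_smul, inv_mul_cancel₀ hs, one_smul]
    rw [this]
    exact Submodule.smul_mem _ _ (sub_mem hwS (Submodule.smul_mem _ _ huS))

section Gmap

variable {K₁ K₂ E₁ E₂ : Type*}
  [DivisionRing K₁] [DivisionRing K₂] [AddCommGroup E₁] [Module K₁ E₁]
  [AddCommGroup E₂] [Module K₂ E₂]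
  {g : Submodule K₁ E₁ → Submodule K₂ E₂}

theorem gmono (hsup : ∀ p q, g (p ⊔ q) = g p ⊔ g q) {p q : Submodule K₁ E₁} (h : p ≤ q) :
    g p ≤ g q := by
  have h2 : g q = g p ⊔ g q := by rw [← hsup, sup_eq_right.2 h]
  rw [h2]; exact le_sup_left

theorem gle_add (hsup : ∀ p q, g (p ⊔ q) = g p ⊔ g q) (y z : E₁) :
    g (span K₁ {y + z}) ≤ g (span K₁ {y}) ⊔ g (span K₁ {z}) := by
  rw [← hsup, sup_span_pair]
  exact gmono hsup ((span_singleton_le_iff_mem _ _).2 (mem_pair_add y z))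

theorem gle_sub (hsup : ∀ p q, g (p ⊔ q) = g p ⊔ g q) (y z : E₁) :
    g (span K₁ {y - z}) ≤ g (span K₁ {y}) ⊔ g (span K₁ {z}) := by
  rw [← hsup, sup_span_pair]
  exact gmono hsup ((span_singleton_le_iff_mem _ _).2 (mem_pair_sub y z))

theorem gzero (hbot : g ⊥ = ⊥) : g (span K₁ {(0 : E₁)}) = ⊥ := by
  rw [span_zero_singleton]; exact hbot

theorem gatomOf (hbot : g ⊥ = ⊥)
    (hatom : ∀ v : E₁, v ≠ 0 → IsAtom (g (span K₁ {v})) ∨ g (span K₁ {v}) = ⊥)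
    {x : E₁} (hne : g (span K₁ {x}) ≠ ⊥) : IsAtom (g (span K₁ {x})) := by
  have hx : x ≠ 0 := fun h0 => hne (by rw [h0]; exact gzero hbot)
  rcases hatom x hx with h | h
  · exact h
  · exact absurd h hne

theorem gpoint (hbot : g ⊥ = ⊥)
    (hatom : ∀ v : E₁, v ≠ 0 → IsAtom (g (span K₁ {v})) ∨ g (span K₁ {v}) = ⊥)
    {x : E₁} {w : E₂} (hw : w ∈ g (span K₁ {x})) (h0 : w ≠ 0) :
    g (span K₁ {x}) = span K₂ {w} := by
  have hne : g (span K₁ {x}) ≠ ⊥ := fun hb => h0 (by rw [hb] at hw; simpa using hw)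
  have hat := gatomOf hbot hatom hne
  have hle : span K₂ {w} ≤ g (span K₁ {x}) := (span_singleton_le_iff_mem _ _).2 hw
  rcases hle.lt_or_eq with hlt | he
  · exact absurd (hat.2 _ hlt) (by simpa [span_singleton_eq_bot] using h0)
  · exact he.symm

theorem gsmularg {c : K₁} (hc : c ≠ 0) (x : E₁) :
    g (span K₁ {c • x}) = g (span K₁ {x}) := by
  rw [span_singleton_smul_eq (IsUnit.mk0 c hc)]

theorem gnegarg (x : E₁) : g (span K₁ {-x}) = g (span K₁ {x}) := by
  rw [span_neg_single]

theorem gtrans (hsup : ∀ p q, g (p ⊔ q) = g p ⊔ g q)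
    {n : E₁} (hn : g (span K₁ {n}) = ⊥) (x : E₁) :
    g (span K₁ {x + n}) = g (span K₁ {x}) := by
  apply le_antisymm
  · have := gle_add hsup x n
    rwa [hn, sup_bot_eq] at this
  · have h2 := gle_sub hsup (x + n) n
    have heq : x + n - n = x := by abel
    rw [heq, hn, sup_bot_eq] at h2
    exact h2

/-- Existence part of the unique lift step. -/
theorem stepEx (hbot : g ⊥ = ⊥) (hsup : ∀ p q, g (p ⊔ q) = g p ⊔ g q)
    (hatom : ∀ v : E₁, v ≠ 0 → IsAtom (g (span K₁ {v})) ∨ g (span K₁ {v}) = ⊥)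
    {p x : E₁} {π ξ₀ : E₂}
    (hp : g (span K₁ {p}) = span K₂ {π}) (hx : g (span K₁ {x}) = span K₂ {ξ₀})
    (hπ : π ≠ 0) (hξπ : ξ₀ ∉ span K₂ {π}) :
    ∃ w : E₂, w ∈ g (span K₁ {x}) ∧ π + w ∈ g (span K₁ {p + x}) := by
  have hξ0 : ξ₀ ≠ 0 := fun h0 => hξπ (by rw [h0]; exact zero_mem _)
  have hπξ : π ∉ span K₂ {ξ₀} := fun hm => hξπ (flipMem hm hπ)
  have hne : g (span K₁ {p + x}) ≠ ⊥ := by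
    intro hb
    have hple : g (span K₁ {p}) ≤ g (span K₁ {p + x}) ⊔ g (span K₁ {x}) := by
      have := gle_sub hsup (p + x) x
      have heq : p + x - x = p := by abel
      rwa [heq] at this
    rw [hb, bot_sup_eq, hx, hp] at hple
    exact hπξ (hple (mem_span_singleton_self π))
  obtain ⟨μ, hμmem, hμ0⟩ := (Submodule.ne_bot_iff _).1 hne
  have hμsp : μ ∈ span K₂ {π, ξ₀} := by
    have hle := gle_add hsup p x
    rw [hp, hx, sup_span_pair] at hle
    exact hle hμmem
  rcases mem_span_pair.1 hμsp with ⟨s, t, hst⟩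
  have hs : s ≠ 0 := by
    intro h0
    rw [h0, zero_smul, zero_add] at hst
    have ht : t ≠ 0 := fun h1 => hμ0 (by rw [← hst, h1, zero_smul])
    -- then g[p+x] = g[x], and g[p] ≤ g[p+x] ⊔ g[x] = g[x] gives π ∈ span ξ₀
    have hgpx : g (span K₁ {p + x}) = span K₂ {ξ₀} := by
      rw [gpoint hbot hatom hμmem hμ0, ← hst, spanEq (mem_span_singleton.2 ⟨t, rfl⟩) (hst ▸ hμ0)]
    have hple : g (span K₁ {p}) ≤ g (span K₁ {p + x}) ⊔ g (span K₁ {x}) := by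
      have := gle_sub hsup (p + x) x
      have heq : p + x - x = p := by abel
      rwa [heq] at this
    rw [hgpx, hx, sup_idem, hp] at hple
    exact hπξ (hple (mem_span_singleton_self π))
  refine ⟨(s⁻¹ * t) • ξ₀, ?_, ?_⟩
  · rw [hx]; exact mem_span_singleton.2 ⟨_, rfl⟩
  · have : π + (s⁻¹ * t) • ξ₀ = s⁻¹ • μ := by
      rw [← hst, smul_add, smul_smul, smul_smul, inv_mul_cancel₀ hs, one_smul]
    rw [this]
    exact smul_mem _ _ hμmem

/-- Any lift step solution is nonzero. -/
theorem stepNe0 (hbot : g ⊥ = ⊥) (hsup : ∀ p q, g (p ⊔ q) = g p ⊔ g q)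
    (hatom : ∀ v : E₁, v ≠ 0 → IsAtom (g (span K₁ {v})) ∨ g (span K₁ {v}) = ⊥)
    {p x : E₁} {π ξ₀ w : E₂}
    (hp : g (span K₁ {p}) = span K₂ {π}) (hx : g (span K₁ {x}) = span K₂ {ξ₀})
    (hπ : π ≠ 0) (hξπ : ξ₀ ∉ span K₂ {π})
    (hw : w ∈ g (span K₁ {x})) (hpw : π + w ∈ g (span K₁ {p + x})) : w ≠ 0 := by
  intro h0
  rw [h0, add_zero] at hpw
  have hgpx := gpoint hbot hatom hpw hπ
  have hxle : g (span K₁ {x}) ≤ g (span K₁ {p + x}) ⊔ g (span K₁ {p}) := by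
    have := gle_sub hsup (p + x) p
    have heq : p + x - p = x := by abel
    rwa [heq] at this
  rw [hgpx, hp, sup_idem, hx] at hxle
  exact hξπ (hxle (mem_span_singleton_self ξ₀))

/-- Uniqueness part of the lift step. -/
theorem stepUnique (hbot : g ⊥ = ⊥) (hsup : ∀ p q, g (p ⊔ q) = g p ⊔ g q)
    (hatom : ∀ v : E₁, v ≠ 0 → IsAtom (g (span K₁ {v})) ∨ g (span K₁ {v}) = ⊥)
    {p x : E₁} {π ξ₀ w w' : E₂}
    (hp : g (span K₁ {p}) = span K₂ {π}) (hx : g (span K₁ {x}) = span K₂ {ξ₀})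
    (hπ : π ≠ 0) (hξπ : ξ₀ ∉ span K₂ {π})
    (hw : w ∈ g (span K₁ {x})) (hpw : π + w ∈ g (span K₁ {p + x}))
    (hw' : w' ∈ g (span K₁ {x})) (hpw' : π + w' ∈ g (span K₁ {p + x})) : w = w' := by
  have hξ0 : ξ₀ ≠ 0 := fun h0 => hξπ (by rw [h0]; exact zero_mem _)
  have i2 : Indep2 K₂ π ξ₀ := Indep2.mk' hπ hξπ
  rw [hx] at hw hw'
  rcases mem_span_singleton.1 hw with ⟨t, rfl⟩
  rcases mem_span_singleton.1 hw' with ⟨t', rfl⟩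
  have hpw0 : π + t' • ξ₀ ≠ 0 := by
    intro h0
    have : π = (-t') • ξ₀ := by
      rw [neg_smul, eq_neg_iff_add_eq_zero]; exact h0
    exact (i2.notMem₁₂) (this ▸ mem_span_singleton.2 ⟨_, rfl⟩)
  have hgpx := gpoint hbot hatom hpw' hpw0
  rw [hgpx] at hpw
  rcases mem_span_singleton.1 hpw with ⟨d, hd⟩
  have hd' : d • π + (d * t') • ξ₀ = (1 : K₂) • π + t • ξ₀ := by
    rw [mul_smul, ← smul_add, hd, one_smul]
  obtain ⟨h1, h2⟩ := i2.coeff_eq hd'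
  rw [← h2, h1, one_mul]


/-- The core three-point lemma: compatible lift data propagates to sums. -/
theorem core (hbot : g ⊥ = ⊥) (hsup : ∀ p q, g (p ⊔ q) = g p ⊔ g q)
    (hatom : ∀ v : E₁, v ≠ 0 → IsAtom (g (span K₁ {v})) ∨ g (span K₁ {v}) = ⊥)
    {p x y : E₁} {π ξ η : E₂}
    (hp : g (span K₁ {p}) = span K₂ {π})
    (hx : g (span K₁ {x}) = span K₂ {ξ})
    (hy : g (span K₁ {y}) = span K₂ {η})
    (ind : Indep3 K₂ π ξ η)
    (h1 : π + ξ ∈ g (span K₁ {p + x}))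
    (h2 : π + η ∈ g (span K₁ {p + y})) :
    ξ + η ∈ g (span K₁ {x + y}) ∧ π + ξ + η ∈ g (span K₁ {p + x + y}) := by
  have gpx : g (span K₁ {p + x}) = span K₂ {π + ξ} := gpoint hbot hatom h1 ind.i12.add_ne
  have gpy : g (span K₁ {p + y}) = span K₂ {π + η} := gpoint hbot hatom h2 ind.i13.add_ne
  -- the point of p + x + y
  have hne1 : g (span K₁ {p + x + y}) ≠ ⊥ := by
    intro hb
    have hyle : g (span K₁ {y}) ≤ g (span K₁ {p + x + y}) ⊔ g (span K₁ {p + x}) := by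
      have := gle_sub hsup (p + x + y) (p + x)
      have heq : p + x + y - (p + x) = y := by abel
      rwa [heq] at this
    rw [hb, bot_sup_eq, gpx, hy] at hyle
    exact ind.notMem₃_sum12 (hyle (mem_span_singleton_self η))
  obtain ⟨μ, hμmem, hμ0⟩ := (Submodule.ne_bot_iff _).1 hne1
  have hμ1 : μ ∈ span K₂ {π + ξ, η} := by
    have hle := gle_add hsup (p + x) y
    rw [gpx, hy, sup_span_pair] at hle
    exact hle hμmem
  rcases mem_span_pair.1 hμ1 with ⟨s, t, hst⟩
  have hμ2 : μ ∈ span K₂ {π + η, ξ} := by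
    have hle := gle_add hsup (p + y) x
    have heq : p + y + x = p + x + y := by abel
    rw [heq, gpy, hx, sup_span_pair] at hle
    exact hle hμmem
  rcases mem_span_pair.1 hμ2 with ⟨s', t', hst'⟩
  have e1 : s • π + s • ξ + t • η = s' • π + t' • ξ + s' • η := by
    have l : s • (π + ξ) + t • η = s • π + s • ξ + t • η := by rw [smul_add]
    have r : s' • (π + η) + t' • ξ = s' • π + t' • ξ + s' • η := by rw [smul_add]; abel
    rw [← l, ← r, hst, hst']
  obtain ⟨he1, he2, he3⟩ := ind.coeff_eq e1
  have hts : t = s := he3.trans he1.symm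
  have hμw : μ = s • (π + ξ + η) := by
    have h' : s • (π + ξ + η) = s • (π + ξ) + t • η := by rw [hts, smul_add]
    rw [h', hst]
  have hs0 : s ≠ 0 := fun h0 => hμ0 (by rw [hμw, h0, zero_smul])
  have hw_mem : π + ξ + η ∈ g (span K₁ {p + x + y}) := by
    have hh : π + ξ + η = s⁻¹ • μ := by
      rw [hμw, smul_smul, inv_mul_cancel₀ hs0, one_smul]
    rw [hh]; exact smul_mem _ _ hμmem
  refine ⟨?_, hw_mem⟩
  have gpxy : g (span K₁ {p + x + y}) = span K₂ {π + ξ + η} :=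
    gpoint hbot hatom hw_mem ind.sum_ne
  have hne2 : g (span K₁ {x + y}) ≠ ⊥ := by
    intro hb
    have hxle : g (span K₁ {x}) ≤ g (span K₁ {x + y}) ⊔ g (span K₁ {y}) := by
      have := gle_sub hsup (x + y) y
      have heq : x + y - y = x := by abel
      rwa [heq] at this
    rw [hb, bot_sup_eq, hx, hy] at hxle
    exact ind.i23.notMem₁₂ (hxle (mem_span_singleton_self ξ))
  obtain ⟨ν, hνmem, hν0⟩ := (Submodule.ne_bot_iff _).1 hne2
  have hν1 : ν ∈ span K₂ {ξ, η} := by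
    have hle := gle_add hsup x y
    rw [hx, hy, sup_span_pair] at hle
    exact hle hνmem
  rcases mem_span_pair.1 hν1 with ⟨s₁, t₁, h₁⟩
  have hν2 : ν ∈ span K₂ {π + ξ + η, π} := by
    have hle := gle_sub hsup (p + x + y) p
    have heq : p + x + y - p = x + y := by abel
    rw [heq, gpxy, hp, sup_span_pair] at hle
    exact hle hνmem
  rcases mem_span_pair.1 hν2 with ⟨a, b, hab⟩
  have e2 : (a + b) • π + a • ξ + a • η = (0 : K₂) • π + s₁ • ξ + t₁ • η := by
    have l : a • (π + ξ + η) + b • π = (a + b) • π + a • ξ + a • η := by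
      rw [smul_add, smul_add, add_smul]; abel
    have r : s₁ • ξ + t₁ • η = (0 : K₂) • π + s₁ • ξ + t₁ • η := by
      rw [zero_smul, zero_add]
    rw [← l, ← r, hab, h₁]
  obtain ⟨f1, f2, f3⟩ := ind.coeff_eq e2
  have ha0 : a ≠ 0 := by
    intro h0
    apply hν0
    rw [← h₁, ← f2, ← f3, h0, zero_smul, zero_smul, add_zero]
  have hν : ν = a • (ξ + η) := by
    rw [smul_add, ← h₁, ← f2, ← f3]
  have : ξ + η = a⁻¹ • ν := by
    rw [hν, smul_smul, inv_mul_cancel₀ ha0, one_smul]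
  rw [this]; exact smul_mem _ _ hνmem

/-- Negation lemma: the lift relation is compatible with negation,
given an auxiliary independent point. -/
theorem negStep (hbot : g ⊥ = ⊥) (hsup : ∀ p q, g (p ⊔ q) = g p ⊔ g q)
    (hatom : ∀ v : E₁, v ≠ 0 → IsAtom (g (span K₁ {v})) ∨ g (span K₁ {v}) = ⊥)
    {p x z : E₁} {π ξ ζ : E₂}
    (hp : g (span K₁ {p}) = span K₂ {π})
    (hx : g (span K₁ {x}) = span K₂ {ξ})
    (hz : g (span K₁ {z}) = span K₂ {ζ})
    (ind : Indep3 K₂ π ξ ζ)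
    (h1 : π + ξ ∈ g (span K₁ {p + x}))
    (hζ : π + ζ ∈ g (span K₁ {p + z})) :
    π - ξ ∈ g (span K₁ {p - x}) := by
  have hxz : ξ + ζ ∈ g (span K₁ {x + z}) :=
    (core hbot hsup hatom hp hx hz ind h1 hζ).1
  have gpz : g (span K₁ {p + z}) = span K₂ {π + ζ} := gpoint hbot hatom hζ ind.i13.add_ne
  have gxz : g (span K₁ {x + z}) = span K₂ {ξ + ζ} := gpoint hbot hatom hxz ind.i23.add_ne
  have hne : g (span K₁ {p - x}) ≠ ⊥ := by
    intro hb
    have hple : g (span K₁ {p}) ≤ g (span K₁ {p - x}) ⊔ g (span K₁ {x}) := by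
      have := gle_add hsup (p - x) x
      have heq : p - x + x = p := by abel
      rwa [heq] at this
    rw [hb, bot_sup_eq, hp, hx] at hple
    exact ind.i12.notMem₁₂ (hple (mem_span_singleton_self π))
  obtain ⟨δ, hδmem, hδ0⟩ := (Submodule.ne_bot_iff _).1 hne
  have hδ1 : δ ∈ span K₂ {π, ξ} := by
    have hle := gle_sub hsup p x
    rw [hp, hx, sup_span_pair] at hle
    exact hle hδmem
  rcases mem_span_pair.1 hδ1 with ⟨c₁, c₂, h₁⟩
  have hδ2 : δ ∈ span K₂ {π + ζ, ξ + ζ} := by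
    have hle := gle_sub hsup (p + z) (x + z)
    have heq : p + z - (x + z) = p - x := by abel
    rw [heq, gpz, gxz, sup_span_pair] at hle
    exact hle hδmem
  rcases mem_span_pair.1 hδ2 with ⟨a, b, h₂⟩
  have e : c₁ • π + c₂ • ξ + (0 : K₂) • ζ = a • π + b • ξ + (a + b) • ζ := by
    have l : c₁ • π + c₂ • ξ = c₁ • π + c₂ • ξ + (0 : K₂) • ζ := by
      rw [zero_smul, add_zero]
    have r : a • (π + ζ) + b • (ξ + ζ) = a • π + b • ξ + (a + b) • ζ := by
      rw [smul_add, smul_add, add_smul]; abel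
    rw [← l, ← r, h₁, h₂]
  obtain ⟨f1, f2, f3⟩ := ind.coeff_eq e
  have hb' : b = -a := by
    rw [eq_neg_iff_add_eq_zero, add_comm]; exact f3.symm
  have hδval : δ = a • (π - ξ) := by
    rw [smul_sub, ← h₁, f1, f2, hb', neg_smul, ← sub_eq_add_neg]
  have ha0 : a ≠ 0 := fun h0 => hδ0 (by rw [hδval, h0, zero_smul])
  have : π - ξ = a⁻¹ • δ := by
    rw [hδval, smul_smul, inv_mul_cancel₀ ha0, one_smul]
  rw [this]; exact smul_mem _ _ hδmem

end Gmap

/-- Bundled context for the construction of the semilinear map. -/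
structure Ctx (K₁ K₂ E₁ E₂ : Type*) [DivisionRing K₁] [DivisionRing K₂]
    [AddCommGroup E₁] [Module K₁ E₁] [AddCommGroup E₂] [Module K₂ E₂] where
  g : Submodule K₁ E₁ → Submodule K₂ E₂
  hbot : g ⊥ = ⊥
  hsup : ∀ p q, g (p ⊔ q) = g p ⊔ g q
  hatom : ∀ v : E₁, v ≠ 0 → IsAtom (g (span K₁ {v})) ∨ g (span K₁ {v}) = ⊥
  a : E₁
  b : E₁
  α : E₂
  β : E₂
  ha : g (span K₁ {a}) = span K₂ {α}
  hb : g (span K₁ {b}) = span K₂ {β}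
  hα : α ≠ 0
  hβ : β ≠ 0
  hβα : β ∉ span K₂ {α}
  hab : α + β ∈ g (span K₁ {a + b})
  u₁ : E₁
  u₂ : E₁
  u₃ : E₁
  w₁ : E₂
  w₂ : E₂
  w₃ : E₂
  hu₁ : g (span K₁ {u₁}) = span K₂ {w₁}
  hu₂ : g (span K₁ {u₂}) = span K₂ {w₂}
  hu₃ : g (span K₁ {u₃}) = span K₂ {w₃}
  hw₁ : w₁ ≠ 0
  hw₂ : w₂ ∉ span K₂ {w₁}
  hw₃ : w₃ ∉ span K₂ {w₁, w₂}

namespace Ctx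

variable {K₁ K₂ E₁ E₂ : Type*}
  [DivisionRing K₁] [DivisionRing K₂] [AddCommGroup E₁] [Module K₁ E₁]
  [AddCommGroup E₂] [Module K₂ E₂]
  (c : Ctx K₁ K₂ E₁ E₂)

theorem hαβ : c.α ∉ span K₂ {c.β} := fun h => c.hβα (flipMem h c.hα)

theorem gaNeBot : c.g (span K₁ {c.a}) ≠ ⊥ := by
  rw [c.ha]; simpa [span_singleton_eq_bot] using c.hα

theorem gbNeBot : c.g (span K₁ {c.b}) ≠ ⊥ := by
  rw [c.hb]; simpa [span_singleton_eq_bot] using c.hβ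

theorem gab_ne : c.g (span K₁ {c.a}) ≠ c.g (span K₁ {c.b}) := by
  rw [c.ha, c.hb]
  intro h
  exact c.hβα (h ▸ mem_span_singleton_self c.β)

/-- There is an image point off any given "line". -/
theorem auxOff (v₁ v₂ : E₂) :
    ∃ (z : E₁) (wz : E₂), c.g (span K₁ {z}) = span K₂ {wz} ∧ wz ∉ span K₂ {v₁, v₂} := by
  by_cases h1 : c.w₁ ∈ span K₂ {v₁, v₂}
  · by_cases h2 : c.w₂ ∈ span K₂ {v₁, v₂}
    · have hle := twoSpanLe h1 h2 c.hw₁ c.hw₂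
      exact ⟨c.u₃, c.w₃, c.hu₃, fun hm => c.hw₃ (hle hm)⟩
    · exact ⟨c.u₂, c.w₂, c.hu₂, h2⟩
  · exact ⟨c.u₁, c.w₁, c.hu₁, h1⟩

/-- The defining property of the lift `f`. -/
def IsLift (x : E₁) (w : E₂) : Prop :=
  w ∈ c.g (span K₁ {x}) ∧
  (c.g (span K₁ {x}) ≠ c.g (span K₁ {c.a}) → c.α + w ∈ c.g (span K₁ {c.a + x})) ∧
  (c.g (span K₁ {x}) = c.g (span K₁ {c.a}) → c.β + w ∈ c.g (span K₁ {c.b + x}))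

theorem liftBot {x : E₁} (hx : c.g (span K₁ {x}) = ⊥) : c.IsLift x 0 := by
  refine ⟨by rw [hx]; exact zero_mem _, fun _ => ?_, fun h => ?_⟩
  · rw [add_zero, gtrans c.hsup hx c.a, c.ha]
    exact mem_span_singleton_self _
  · rw [hx] at h
    exact absurd h.symm c.gaNeBot

theorem lift_eq_zero {x : E₁} {w : E₂} (hx : c.g (span K₁ {x}) = ⊥) (h : c.IsLift x w) :
    w = 0 := by
  have := h.1; rw [hx] at this; simpa using this

theorem lift_rep {x : E₁} (hx : c.g (span K₁ {x}) ≠ ⊥) (hxa : c.g (span K₁ {x}) ≠ c.g (span K₁ {c.a})) :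
    ∃ w₀ : E₂, c.g (span K₁ {x}) = span K₂ {w₀} ∧ w₀ ∉ span K₂ {c.α} := by
  obtain ⟨w₀, hmem, h0⟩ := (Submodule.ne_bot_iff _).1 hx
  have hgx := gpoint c.hbot c.hatom hmem h0
  refine ⟨w₀, hgx, fun hm => hxa ?_⟩
  rw [hgx, spanEq hm h0, ← c.ha]

theorem lift_exists (x : E₁) : ∃ w, c.IsLift x w := by
  by_cases hx : c.g (span K₁ {x}) = ⊥
  · exact ⟨0, c.liftBot hx⟩
  · by_cases hxa : c.g (span K₁ {x}) = c.g (span K₁ {c.a})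
    · have hgxα : c.g (span K₁ {x}) = span K₂ {c.α} := hxa.trans c.ha
      obtain ⟨w, hw, hbw⟩ := stepEx c.hbot c.hsup c.hatom c.hb hgxα c.hβ c.hαβ
      exact ⟨w, hw, fun hne => absurd hxa hne, fun _ => hbw⟩
    · obtain ⟨w₀, hgx, hw₀α⟩ := c.lift_rep hx hxa
      obtain ⟨w, hw, haw⟩ := stepEx c.hbot c.hsup c.hatom c.ha hgx c.hα hw₀α
      exact ⟨w, hw, fun _ => haw, fun h => absurd h hxa⟩

theorem lift_unique {x : E₁} {w w' : E₂} (h : c.IsLift x w) (h' : c.IsLift x w') : w = w' := by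
  by_cases hx : c.g (span K₁ {x}) = ⊥
  · rw [c.lift_eq_zero hx h, c.lift_eq_zero hx h']
  · by_cases hxa : c.g (span K₁ {x}) = c.g (span K₁ {c.a})
    · have hgxα : c.g (span K₁ {x}) = span K₂ {c.α} := hxa.trans c.ha
      exact stepUnique c.hbot c.hsup c.hatom c.hb hgxα c.hβ c.hαβ
        h.1 (h.2.2 hxa) h'.1 (h'.2.2 hxa)
    · obtain ⟨w₀, hgx, hw₀α⟩ := c.lift_rep hx hxa
      exact stepUnique c.hbot c.hsup c.hatom c.ha hgx c.hα hw₀α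
        h.1 (h.2.1 hxa) h'.1 (h'.2.1 hxa)

theorem lift_ne0 {x : E₁} {w : E₂} (hx : c.g (span K₁ {x}) ≠ ⊥) (h : c.IsLift x w) :
    w ≠ 0 := by
  by_cases hxa : c.g (span K₁ {x}) = c.g (span K₁ {c.a})
  · have hgxα : c.g (span K₁ {x}) = span K₂ {c.α} := hxa.trans c.ha
    exact stepNe0 c.hbot c.hsup c.hatom c.hb hgxα c.hβ c.hαβ h.1 (h.2.2 hxa)
  · obtain ⟨w₀, hgx, hw₀α⟩ := c.lift_rep hx hxa
    exact stepNe0 c.hbot c.hsup c.hatom c.ha hgx c.hα hw₀α h.1 (h.2.1 hxa)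

theorem lift_point {x : E₁} {w : E₂} (hx : c.g (span K₁ {x}) ≠ ⊥) (h : c.IsLift x w) :
    c.g (span K₁ {x}) = span K₂ {w} :=
  gpoint c.hbot c.hatom h.1 (c.lift_ne0 hx h)

theorem lift_a : c.IsLift c.a c.α := by
  refine ⟨by rw [c.ha]; exact mem_span_singleton_self _, fun h => absurd rfl h, fun _ => ?_⟩
  have heq : c.b + c.a = c.a + c.b := by abel
  rw [heq]
  have h2 : c.β + c.α = c.α + c.β := by abel
  rw [h2]
  exact c.hab

theorem lift_b : c.IsLift c.b c.β := by
  refine ⟨by rw [c.hb]; exact mem_span_singleton_self _, fun _ => c.hab, fun h => absurd h.symm c.gab_ne⟩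

/-- Coherence of the lift with the second base point `b`. -/
theorem betaCoh {x : E₁} {w : E₂} (h : c.IsLift x w)
    (hxb : c.g (span K₁ {x}) ≠ c.g (span K₁ {c.b})) :
    c.β + w ∈ c.g (span K₁ {c.b + x}) := by
  by_cases hxbot : c.g (span K₁ {x}) = ⊥
  · rw [c.lift_eq_zero hxbot h, add_zero, gtrans c.hsup hxbot c.b, c.hb]
    exact mem_span_singleton_self _
  by_cases hxa : c.g (span K₁ {x}) = c.g (span K₁ {c.a})
  · exact h.2.2 hxa
  have hw0 := c.lift_ne0 hxbot h
  have hgx := c.lift_point hxbot h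
  have hRa := h.2.1 hxa
  have hwα : w ∉ span K₂ {c.α} := fun hm => hxa (by rw [hgx, spanEq hm hw0, ← c.ha])
  have hwβ : w ∉ span K₂ {c.β} := fun hm => hxb (by rw [hgx, spanEq hm hw0, ← c.hb])
  by_cases hind : w ∈ span K₂ {c.α, c.β}
  · -- collinear case: use an auxiliary point off the line ⟨α, β⟩
    obtain ⟨z, wz, hgz, hwz⟩ := c.auxOff c.α c.β
    obtain ⟨wz', hlz⟩ := c.lift_exists z
    have hwz0 : wz ≠ 0 := fun h0 => hwz (by rw [h0]; exact zero_mem _)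
    have hgzbot : c.g (span K₁ {z}) ≠ ⊥ := by
      rw [hgz]; simpa [span_singleton_eq_bot] using hwz0
    have hwz'0 := c.lift_ne0 hgzbot hlz
    have hgz' := c.lift_point hgzbot hlz
    have hwz'mem : wz' ∉ span K₂ {c.α, c.β} := by
      intro hm
      apply hwz
      have he : span K₂ {wz} = span K₂ {wz'} := by rw [← hgz, hgz']
      exact memTrans (he ▸ mem_span_singleton_self wz) hm
    have hza : c.g (span K₁ {z}) ≠ c.g (span K₁ {c.a}) := by
      intro he
      have hm := hlz.1
      rw [he, c.ha] at hm
      exact hwz'mem (span_pair_left _ _ hm)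
    have hzb : c.g (span K₁ {z}) ≠ c.g (span K₁ {c.b}) := by
      intro he
      have hm := hlz.1
      rw [he, c.hb] at hm
      exact hwz'mem (span_pair_right _ _ hm)
    have hRaz : c.α + wz' ∈ c.g (span K₁ {c.a + z}) := hlz.2.1 hza
    have hcor1 := core c.hbot c.hsup c.hatom c.ha c.hb hgz'
      (Indep3.mk' c.hα c.hβα hwz'mem) c.hab hRaz
    have hwz'aw : wz' ∉ span K₂ {c.α, w} := by
      intro hm
      exact hwz'mem (spanPairLe (span_pair_left _ _ (mem_span_singleton_self c.α)) hind hm)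
    have hcor2 := core c.hbot c.hsup c.hatom c.ha hgx hgz'
      (Indep3.mk' c.hα hwα hwz'aw) hRa hRaz
    have hβz' : c.β ∉ span K₂ {wz'} :=
      fun hm => hwz'mem (span_pair_right _ _ (flipMem hm c.hβ))
    have hwbz' : w ∉ span K₂ {wz', c.β} :=
      notMem_span_aux hwz'mem hind (span_pair_right _ _ (mem_span_singleton_self c.β)) hwβ
    have h1' : wz' + c.β ∈ c.g (span K₁ {z + c.b}) := by
      have heq : z + c.b = c.b + z := by abel
      rw [heq, add_comm wz' c.β]
      exact hcor1.1
    have h2' : wz' + w ∈ c.g (span K₁ {z + x}) := by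
      have heq : z + x = x + z := by abel
      rw [heq, add_comm wz' w]
      exact hcor2.1
    have hcor3 := core c.hbot c.hsup c.hatom hgz' c.hb hgx
      (Indep3.mk' hwz'0 hβz' hwbz') h1' h2'
    exact hcor3.1
  · exact (core c.hbot c.hsup c.hatom c.ha c.hb hgx
      (Indep3.mk' c.hα c.hβα hind) c.hab hRa).1

/-- Auxiliary: relation between a lift and an auxiliary point in general position. -/
theorem pairAux {x z : E₁} {wx wz' : E₂} (hx : c.IsLift x wx) (hlz : c.IsLift z wz')
    (hxbot : c.g (span K₁ {x}) ≠ ⊥) (hzbot : c.g (span K₁ {z}) ≠ ⊥)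
    (h1 : wz' ∉ span K₂ {c.α, wx}) (h2 : wz' ∉ span K₂ {c.β, wx}) :
    wx + wz' ∈ c.g (span K₁ {x + z}) := by
  have hgx := c.lift_point hxbot hx
  have hgz' := c.lift_point hzbot hlz
  have hwx0 := c.lift_ne0 hxbot hx
  have hwz'0 := c.lift_ne0 hzbot hlz
  have hzα : wz' ∉ span K₂ {c.α} := fun hm => h1 (span_pair_left _ _ hm)
  have hzβ : wz' ∉ span K₂ {c.β} := fun hm => h2 (span_pair_left _ _ hm)
  have hza : c.g (span K₁ {z}) ≠ c.g (span K₁ {c.a}) := by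
    intro he
    have hm := hlz.1
    rw [he, c.ha] at hm
    exact hzα hm
  have hzb : c.g (span K₁ {z}) ≠ c.g (span K₁ {c.b}) := by
    intro he
    have hm := hlz.1
    rw [he, c.hb] at hm
    exact hzβ hm
  by_cases hxa : c.g (span K₁ {x}) = c.g (span K₁ {c.a})
  · -- via base b
    have hwxβ : wx ∉ span K₂ {c.β} := by
      intro hm
      exact (hxa ▸ c.gab_ne : c.g (span K₁ {x}) ≠ c.g (span K₁ {c.b}))
        (by rw [hgx, spanEq hm hwx0, ← c.hb])
    have hRbx : c.β + wx ∈ c.g (span K₁ {c.b + x}) := hx.2.2 hxa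
    have hRbz : c.β + wz' ∈ c.g (span K₁ {c.b + z}) := c.betaCoh hlz hzb
    exact (core c.hbot c.hsup c.hatom c.hb hgx hgz'
      (Indep3.mk' c.hβ hwxβ h2) hRbx hRbz).1
  · have hwxα : wx ∉ span K₂ {c.α} := fun hm => hxa (by rw [hgx, spanEq hm hwx0, ← c.ha])
    have hRax : c.α + wx ∈ c.g (span K₁ {c.a + x}) := hx.2.1 hxa
    have hRaz : c.α + wz' ∈ c.g (span K₁ {c.a + z}) := hlz.2.1 hza
    exact (core c.hbot c.hsup c.hatom c.ha hgx hgz'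
      (Indep3.mk' c.hα hwxα h1) hRax hRaz).1

/-- Pairwise additivity relation: lifts of points with distinct images add correctly. -/
theorem pairG {x y : E₁} {wx wy : E₂} (hx : c.IsLift x wx) (hy : c.IsLift y wy)
    (hxbot : c.g (span K₁ {x}) ≠ ⊥) (hybot : c.g (span K₁ {y}) ≠ ⊥)
    (hne : c.g (span K₁ {x}) ≠ c.g (span K₁ {y})) :
    wx + wy ∈ c.g (span K₁ {x + y}) := by
  have hgx := c.lift_point hxbot hx
  have hgy := c.lift_point hybot hy
  have hwx0 := c.lift_ne0 hxbot hx
  have hwy0 := c.lift_ne0 hybot hy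
  have hyx : wy ∉ span K₂ {wx} := fun hm =>
    hne (hgx.trans (((spanEq hm hwy0).symm).trans hgy.symm))
  by_cases hA : c.α ∈ span K₂ {wx, wy}
  · by_cases hB : c.β ∈ span K₂ {wx, wy}
    · -- both base images on the line: use an auxiliary point
      obtain ⟨z, wz, hgz, hwz⟩ := c.auxOff wx wy
      obtain ⟨wz', hlz⟩ := c.lift_exists z
      have hwz0 : wz ≠ 0 := fun h0 => hwz (by rw [h0]; exact zero_mem _)
      have hgzbot : c.g (span K₁ {z}) ≠ ⊥ := by
        rw [hgz]; simpa [span_singleton_eq_bot] using hwz0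
      have hwz'0 := c.lift_ne0 hgzbot hlz
      have hgz' := c.lift_point hgzbot hlz
      have hwz'S : wz' ∉ span K₂ {wx, wy} := by
        intro hm
        apply hwz
        have he : span K₂ {wz} = span K₂ {wz'} := by rw [← hgz, hgz']
        exact memTrans (he ▸ mem_span_singleton_self wz) hm
      have hwxS : wx ∈ span K₂ {wx, wy} := span_pair_left _ _ (mem_span_singleton_self wx)
      have hwyS : wy ∈ span K₂ {wx, wy} := span_pair_right _ _ (mem_span_singleton_self wy)
      have hRzx : wx + wz' ∈ c.g (span K₁ {x + z}) :=
        c.pairAux hx hlz hxbot hgzbot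
          (fun hm => hwz'S (spanPairLe hA hwxS hm))
          (fun hm => hwz'S (spanPairLe hB hwxS hm))
      have hRzy : wy + wz' ∈ c.g (span K₁ {y + z}) :=
        c.pairAux hy hlz hybot hgzbot
          (fun hm => hwz'S (spanPairLe hA hwyS hm))
          (fun hm => hwz'S (spanPairLe hB hwyS hm))
      have hxz' : wx ∉ span K₂ {wz'} := fun hm =>
        hwz'S (span_pair_left _ _ (flipMem hm hwx0))
      have hyz' : wy ∉ span K₂ {wz', wx} := notMem_span_aux hwz'S hwyS hwxS hyx
      have h1' : wz' + wx ∈ c.g (span K₁ {z + x}) := by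
        have heq : z + x = x + z := by abel
        rw [heq, add_comm wz' wx]
        exact hRzx
      have h2' : wz' + wy ∈ c.g (span K₁ {z + y}) := by
        have heq : z + y = y + z := by abel
        rw [heq, add_comm wz' wy]
        exact hRzy
      exact (core c.hbot c.hsup c.hatom hgz' hgx hgy
        (Indep3.mk' hwz'0 hxz' hyz') h1' h2').1
    · -- β off the line: use base b
      have hwxβ : wx ∉ span K₂ {c.β} := fun hm =>
        hB (memTrans (flipMem hm hwx0)
          (span_pair_left _ _ (mem_span_singleton_self wx)))
      have hwyβ : wy ∉ span K₂ {c.β, wx} :=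
        notMem_span_aux hB (span_pair_right _ _ (mem_span_singleton_self wy))
          (span_pair_left _ _ (mem_span_singleton_self wx)) hyx
      have hxb : c.g (span K₁ {x}) ≠ c.g (span K₁ {c.b}) := by
        intro he
        have hm := hx.1
        rw [he, c.hb] at hm
        exact hwxβ (by
          rcases mem_span_singleton.1 hm with ⟨d, hd⟩
          exact hm)
      have hyb : c.g (span K₁ {y}) ≠ c.g (span K₁ {c.b}) := by
        intro he
        have hm := hy.1
        rw [he, c.hb] at hm
        exact (fun h => hwyβ (span_pair_left _ _ h)) hm
      exact (core c.hbot c.hsup c.hatom c.hb hgx hgy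
        (Indep3.mk' c.hβ hwxβ hwyβ) (c.betaCoh hx hxb) (c.betaCoh hy hyb)).1
  · -- α off the line: use base a
    have hwxα : wx ∉ span K₂ {c.α} := fun hm =>
      hA (memTrans (flipMem hm hwx0)
        (span_pair_left _ _ (mem_span_singleton_self wx)))
    have hwyα : wy ∉ span K₂ {c.α, wx} :=
      notMem_span_aux hA (span_pair_right _ _ (mem_span_singleton_self wy))
        (span_pair_left _ _ (mem_span_singleton_self wx)) hyx
    have hxa : c.g (span K₁ {x}) ≠ c.g (span K₁ {c.a}) := by
      intro he
      have hm := hx.1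
      rw [he, c.ha] at hm
      exact hwxα hm
    have hya : c.g (span K₁ {y}) ≠ c.g (span K₁ {c.a}) := by
      intro he
      have hm := hy.1
      rw [he, c.ha] at hm
      exact (fun h => hwyα (span_pair_left _ _ h)) hm
    exact (core c.hbot c.hsup c.hatom c.ha hgx hgy
      (Indep3.mk' c.hα hwxα hwyα) (hx.2.1 hxa) (hy.2.1 hya)).1

/-- Lifts are compatible with negation. -/
theorem negLift {x : E₁} {w : E₂} (h : c.IsLift x w) : c.IsLift (-x) (-w) := by
  by_cases hxbot : c.g (span K₁ {x}) = ⊥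
  · rw [c.lift_eq_zero hxbot h, neg_zero]
    exact c.liftBot (by rw [gnegarg (g := c.g) x]; exact hxbot)
  have hgnx : c.g (span K₁ {-x}) = c.g (span K₁ {x}) := gnegarg (g := c.g) x
  have hw0 := c.lift_ne0 hxbot h
  have hgx := c.lift_point hxbot h
  refine ⟨by rw [hgnx]; exact neg_mem h.1, ?_, ?_⟩
  · intro hne
    have hxa : c.g (span K₁ {x}) ≠ c.g (span K₁ {c.a}) := by rwa [hgnx] at hne
    have hwα : w ∉ span K₂ {c.α} := fun hm => hxa (by rw [hgx, spanEq hm hw0, ← c.ha])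
    obtain ⟨z, wz, hgz, hwz⟩ := c.auxOff c.α w
    obtain ⟨wz', hlz⟩ := c.lift_exists z
    have hwz0 : wz ≠ 0 := fun h0 => hwz (by rw [h0]; exact zero_mem _)
    have hgzbot : c.g (span K₁ {z}) ≠ ⊥ := by
      rw [hgz]; simpa [span_singleton_eq_bot] using hwz0
    have hwz'0 := c.lift_ne0 hgzbot hlz
    have hgz' := c.lift_point hgzbot hlz
    have hwz'S : wz' ∉ span K₂ {c.α, w} := by
      intro hm
      apply hwz
      have he : span K₂ {wz} = span K₂ {wz'} := by rw [← hgz, hgz']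
      exact memTrans (he ▸ mem_span_singleton_self wz) hm
    have hza : c.g (span K₁ {z}) ≠ c.g (span K₁ {c.a}) := by
      intro he
      have hm := hlz.1
      rw [he, c.ha] at hm
      exact hwz'S (span_pair_left _ _ hm)
    have hRaz : c.α + wz' ∈ c.g (span K₁ {c.a + z}) := hlz.2.1 hza
    have hres := negStep c.hbot c.hsup c.hatom c.ha hgx hgz'
      (Indep3.mk' c.hα hwα hwz'S) (h.2.1 hxa) hRaz
    have heq : c.a + -x = c.a - x := (sub_eq_add_neg _ _).symm
    rw [heq, show c.α + -w = c.α - w from (sub_eq_add_neg _ _).symm]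
    exact hres
  · intro he
    have hxa : c.g (span K₁ {x}) = c.g (span K₁ {c.a}) := by rwa [hgnx] at he
    have hwβ : w ∉ span K₂ {c.β} := by
      intro hm
      exact (hxa ▸ c.gab_ne : c.g (span K₁ {x}) ≠ c.g (span K₁ {c.b}))
        (by rw [hgx, spanEq hm hw0, ← c.hb])
    obtain ⟨z, wz, hgz, hwz⟩ := c.auxOff c.β w
    obtain ⟨wz', hlz⟩ := c.lift_exists z
    have hwz0 : wz ≠ 0 := fun h0 => hwz (by rw [h0]; exact zero_mem _)
    have hgzbot : c.g (span K₁ {z}) ≠ ⊥ := by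
      rw [hgz]; simpa [span_singleton_eq_bot] using hwz0
    have hwz'0 := c.lift_ne0 hgzbot hlz
    have hgz' := c.lift_point hgzbot hlz
    have hwz'S : wz' ∉ span K₂ {c.β, w} := by
      intro hm
      apply hwz
      have he2 : span K₂ {wz} = span K₂ {wz'} := by rw [← hgz, hgz']
      exact memTrans (he2 ▸ mem_span_singleton_self wz) hm
    have hzb : c.g (span K₁ {z}) ≠ c.g (span K₁ {c.b}) := by
      intro he2
      have hm := hlz.1
      rw [he2, c.hb] at hm
      exact hwz'S (span_pair_left _ _ hm)
    have hRbz : c.β + wz' ∈ c.g (span K₁ {c.b + z}) := c.betaCoh hlz hzb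
    have hres := negStep c.hbot c.hsup c.hatom c.hb hgx hgz'
      (Indep3.mk' c.hβ hwβ hwz'S) (h.2.2 hxa) hRbz
    have heq : c.b + -x = c.b - x := (sub_eq_add_neg _ _).symm
    rw [heq, show c.β + -w = c.β - w from (sub_eq_add_neg _ _).symm]
    exact hres

/-- Lifts are invariant under translation by a kernel element. -/
theorem transLift {n x : E₁} {w : E₂} (hn : c.g (span K₁ {n}) = ⊥) (h : c.IsLift x w) :
    c.IsLift (x + n) w := by
  have e0 : c.g (span K₁ {x + n}) = c.g (span K₁ {x}) := gtrans c.hsup hn x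
  refine ⟨by rw [e0]; exact h.1, ?_, ?_⟩
  · intro hne
    rw [e0] at hne
    have e1 : c.g (span K₁ {c.a + (x + n)}) = c.g (span K₁ {c.a + x}) := by
      have heq : c.a + (x + n) = (c.a + x) + n := by abel
      rw [heq, gtrans c.hsup hn]
    rw [e1]; exact h.2.1 hne
  · intro he
    rw [e0] at he
    have e1 : c.g (span K₁ {c.b + (x + n)}) = c.g (span K₁ {c.b + x}) := by
      have heq : c.b + (x + n) = (c.b + x) + n := by abel
      rw [heq, gtrans c.hsup hn]
    rw [e1]; exact h.2.2 he

/-- Additivity of lifts for points with distinct images. -/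
theorem add2Lift {x y : E₁} {wx wy : E₂} (hx : c.IsLift x wx) (hy : c.IsLift y wy)
    (hxbot : c.g (span K₁ {x}) ≠ ⊥) (hybot : c.g (span K₁ {y}) ≠ ⊥)
    (hne : c.g (span K₁ {x}) ≠ c.g (span K₁ {y})) :
    c.IsLift (x + y) (wx + wy) := by
  have hG := c.pairG hx hy hxbot hybot hne
  have hgx := c.lift_point hxbot hx
  have hgy := c.lift_point hybot hy
  have hwx0 := c.lift_ne0 hxbot hx
  have hwy0 := c.lift_ne0 hybot hy
  have hyx : wy ∉ span K₂ {wx} := fun hm =>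
    hne (hgx.trans (((spanEq hm hwy0).symm).trans hgy.symm))
  have i2 : Indep2 K₂ wx wy := Indep2.mk' hwx0 hyx
  have hsum0 : wx + wy ≠ 0 := i2.add_ne
  obtain ⟨w', hl'⟩ := c.lift_exists (x + y)
  have hgxy : c.g (span K₁ {x + y}) = span K₂ {wx + wy} :=
    gpoint c.hbot c.hatom hG hsum0
  have hxybot : c.g (span K₁ {x + y}) ≠ ⊥ := by
    rw [hgxy]; simpa [span_singleton_eq_bot] using hsum0
  have hw'mem := hl'.1
  rw [hgxy] at hw'mem
  rcases mem_span_singleton.1 hw'mem with ⟨e, he⟩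
  have hnlx := c.negLift hx
  have hnxbot : c.g (span K₁ {-x}) ≠ ⊥ := by
    rw [gnegarg (g := c.g) x]; exact hxbot
  have hne2 : c.g (span K₁ {x + y}) ≠ c.g (span K₁ {-x}) := by
    rw [gnegarg (g := c.g) x]
    intro he2
    have hyle : c.g (span K₁ {y}) ≤ c.g (span K₁ {x + y}) ⊔ c.g (span K₁ {x}) := by
      have := gle_sub (g := c.g) c.hsup (x + y) x
      have heq : x + y - x = y := by abel
      rwa [heq] at this
    rw [he2, sup_idem, hgx] at hyle
    exact hyx (hyle (by rw [hgy]; exact mem_span_singleton_self wy))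
  have hG2 := c.pairG hl' hnlx hxybot hnxbot hne2
  have heq : (x + y) + -x = y := by abel
  rw [heq, hgy] at hG2
  rcases mem_span_singleton.1 hG2 with ⟨d, hd⟩
  have hcomb : e • wx + e • wy = (1 : K₂) • wx + d • wy := by
    rw [one_smul]
    have h1 : e • wx + e • wy = w' := by rw [← smul_add]; exact he
    have h2 : wx + d • wy = w' := by rw [hd]; abel
    rw [h1, h2]
  obtain ⟨he1, _⟩ := i2.coeff_eq hcomb
  have hw' : w' = wx + wy := by rw [← he, he1, one_smul]
  rwa [hw'] at hl'

/-- Full additivity of lifts. -/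
theorem addLift {x y : E₁} {wx wy : E₂} (hx : c.IsLift x wx) (hy : c.IsLift y wy) :
    c.IsLift (x + y) (wx + wy) := by
  by_cases hxbot : c.g (span K₁ {x}) = ⊥
  · have hwx : wx = 0 := c.lift_eq_zero hxbot hx
    have h2 := c.transLift hxbot hy
    have heq : y + x = x + y := by abel
    rw [heq] at h2
    rw [hwx, zero_add]
    exact h2
  by_cases hybot : c.g (span K₁ {y}) = ⊥
  · have hwy : wy = 0 := c.lift_eq_zero hybot hy
    rw [hwy, add_zero]
    exact c.transLift hybot hx
  by_cases hne : c.g (span K₁ {x}) = c.g (span K₁ {y})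
  case neg => exact c.add2Lift hx hy hxbot hybot hne
  -- equal images
  have hgx := c.lift_point hxbot hx
  have hgy := c.lift_point hybot hy
  have hwx0 := c.lift_ne0 hxbot hx
  have hwy0 := c.lift_ne0 hybot hy
  have hwyx : wy ∈ span K₂ {wx} := by
    rw [← hgx, hne]
    exact hy.1
  by_cases hxybot : c.g (span K₁ {x + y}) = ⊥
  · have hnlx := c.negLift hx
    have h2 := c.transLift hxybot hnlx
    have heq : -x + (x + y) = y := by abel
    rw [heq] at h2
    have hwy : wy = -wx := c.lift_unique hy h2
    rw [hwy, add_neg_cancel]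
    exact c.liftBot hxybot
  · -- the interesting equal-image case: use an auxiliary point
    obtain ⟨z, wz, hgz, hwz⟩ := c.auxOff wx wx
    obtain ⟨wz', hlz⟩ := c.lift_exists z
    have hwz0 : wz ≠ 0 := fun h0 => hwz (by rw [h0]; exact zero_mem _)
    have hgzbot : c.g (span K₁ {z}) ≠ ⊥ := by
      rw [hgz]; simpa [span_singleton_eq_bot] using hwz0
    have hwz'0 := c.lift_ne0 hgzbot hlz
    have hgz' := c.lift_point hgzbot hlz
    have hwzx : wz ∉ span K₂ {wx} := fun hm => hwz (span_pair_left _ _ hm)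
    have hwz'x : wz' ∉ span K₂ {wx} := by
      intro hm
      apply hwzx
      have he : span K₂ {wz} = span K₂ {wz'} := by rw [← hgz, hgz']
      exact memTrans (he ▸ mem_span_singleton_self wz) hm
    have hzx : c.g (span K₁ {z}) ≠ c.g (span K₁ {x}) := by
      intro he
      have hm := hlz.1
      rw [he, hgx] at hm
      exact hwz'x hm
    have hyz : c.g (span K₁ {y}) ≠ c.g (span K₁ {z}) := by
      rw [← hne]; exact fun h => hzx h.symm
    have h1 : c.IsLift (y + z) (wy + wz') := c.add2Lift hy hlz hybot hgzbot hyz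
    have hyzbot : c.g (span K₁ {y + z}) ≠ ⊥ := by
      intro hb
      have hyle : c.g (span K₁ {y}) ≤ c.g (span K₁ {y + z}) ⊔ c.g (span K₁ {z}) := by
        have := gle_sub (g := c.g) c.hsup (y + z) z
        have heq : y + z - z = y := by abel
        rwa [heq] at this
      rw [hb, bot_sup_eq, hgz'] at hyle
      have hm : wy ∈ span K₂ {wz'} := hyle (by rw [hgy]; exact mem_span_singleton_self wy)
      exact hwz'x (memTrans (flipMem hm hwy0) hwyx)
    have hne2 : c.g (span K₁ {x}) ≠ c.g (span K₁ {y + z}) := by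
      intro he
      have hm : wy + wz' ∈ span K₂ {wx} := by
        rw [← hgx, he]
        exact h1.1
      have hmz : wz' ∈ span K₂ {wx} := by
        have h3 : wz' = (wy + wz') - wy := by abel
        rw [h3]
        exact sub_mem hm hwyx
      exact hwz'x hmz
    have h2 := c.add2Lift hx h1 hxbot hyzbot hne2
    obtain ⟨w', hl'⟩ := c.lift_exists (x + y)
    have hgxyx : c.g (span K₁ {x + y}) = c.g (span K₁ {x}) := by
      have hle : c.g (span K₁ {x + y}) ≤ c.g (span K₁ {x}) := by
        have := gle_add (g := c.g) c.hsup x y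
        rwa [← hne, sup_idem] at this
      rcases hle.lt_or_eq with hlt | heq2
      · exact absurd ((gatomOf c.hbot c.hatom hxbot).2 _ hlt) hxybot
      · exact heq2
    have hxyz : c.g (span K₁ {x + y}) ≠ c.g (span K₁ {z}) := by
      rw [hgxyx]; exact fun h => hzx h.symm
    have h3 := c.add2Lift hl' hlz hxybot hgzbot hxyz
    have heq : (x + y) + z = x + (y + z) := by abel
    rw [heq] at h3
    have h4 : w' + wz' = wx + (wy + wz') := c.lift_unique h3 h2
    have hw' : w' = wx + wy := by
      have h5 : w' + wz' = (wx + wy) + wz' := by rw [h4]; abel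
      exact add_right_cancel h5
    rwa [hw'] at hl'

/-- Scalar compatibility, case of a point with image different from that of `a`. -/
theorem smulLift₁ {x : E₁} {wx : E₂} {lam : K₁} {cc : K₂} (hx : c.IsLift x wx)
    (hxbot : c.g (span K₁ {x}) ≠ ⊥) (hxa : c.g (span K₁ {x}) ≠ c.g (span K₁ {c.a}))
    (hlam : lam ≠ 0) (hca : c.IsLift (lam • c.a) (cc • c.α)) :
    c.IsLift (lam • x) (cc • wx) := by
  have hgx := c.lift_point hxbot hx
  have hwx0 := c.lift_ne0 hxbot hx
  have hwxα : wx ∉ span K₂ {c.α} := fun hm => hxa (by rw [hgx, spanEq hm hwx0, ← c.ha])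
  have hgsx : c.g (span K₁ {lam • x}) = c.g (span K₁ {x}) := gsmularg (g := c.g) hlam x
  have hgsa : c.g (span K₁ {lam • c.a}) = c.g (span K₁ {c.a}) := gsmularg (g := c.g) hlam c.a
  have hsabot : c.g (span K₁ {lam • c.a}) ≠ ⊥ := by rw [hgsa]; exact c.gaNeBot
  have hsxbot : c.g (span K₁ {lam • x}) ≠ ⊥ := by rw [hgsx]; exact hxbot
  obtain ⟨w2, hl2⟩ := c.lift_exists (lam • x)
  have hw2mem : w2 ∈ span K₂ {wx} := by
    have := hl2.1
    rwa [hgsx, hgx] at this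
  rcases mem_span_singleton.1 hw2mem with ⟨e, he⟩
  have hnesa : c.g (span K₁ {lam • c.a}) ≠ c.g (span K₁ {lam • x}) := by
    rw [hgsa, hgsx]; exact fun h => hxa h.symm
  have hpair := c.pairG hca hl2 hsabot hsxbot hnesa
  have heqs : lam • c.a + lam • x = lam • (c.a + x) := (smul_add _ _ _).symm
  rw [heqs, gsmularg (g := c.g) hlam] at hpair
  have i2 : Indep2 K₂ c.α wx := Indep2.mk' c.hα hwxα
  have hax : c.g (span K₁ {c.a + x}) = span K₂ {c.α + wx} :=
    gpoint c.hbot c.hatom (hx.2.1 hxa) i2.add_ne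
  rw [hax] at hpair
  rcases mem_span_singleton.1 hpair with ⟨d, hd⟩
  have hcomb : d • c.α + d • wx = cc • c.α + e • wx := by
    have h1 : d • c.α + d • wx = cc • c.α + w2 := by rw [← smul_add]; exact hd
    rw [h1, he]
  obtain ⟨hd1, hd2⟩ := i2.coeff_eq hcomb
  have hw2 : w2 = cc • wx := by rw [← he, ← hd2, hd1]
  rwa [hw2] at hl2

/-- Scalar compatibility, general case. -/
theorem smulLift {x : E₁} {wx : E₂} {lam : K₁} {cc : K₂} (hx : c.IsLift x wx)
    (hca : c.IsLift (lam • c.a) (cc • c.α)) :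
    c.IsLift (lam • x) (cc • wx) := by
  by_cases hlam : lam = 0
  · subst hlam
    rw [zero_smul] at hca ⊢
    have hbot0 : c.g (span K₁ {(0 : E₁)}) = ⊥ := gzero c.hbot
    have hcc : cc • c.α = 0 := c.lift_eq_zero hbot0 hca
    have hcc0 : cc = 0 := by
      by_contra hne
      exact c.hα (smul_cancel0 hne hcc)
    rw [hcc0, zero_smul]
    exact c.liftBot hbot0
  by_cases hxbot : c.g (span K₁ {x}) = ⊥
  · have hwx : wx = 0 := c.lift_eq_zero hxbot hx
    rw [hwx, smul_zero]
    exact c.liftBot (by rw [gsmularg (g := c.g) hlam x]; exact hxbot)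
  by_cases hxa : c.g (span K₁ {x}) = c.g (span K₁ {c.a})
  · -- via b
    have hlb : c.IsLift (lam • c.b) (cc • c.β) :=
      c.smulLift₁ c.lift_b c.gbNeBot (fun h => c.gab_ne h.symm) hlam hca
    have hgx := c.lift_point hxbot hx
    have hwx0 := c.lift_ne0 hxbot hx
    have hgsx : c.g (span K₁ {lam • x}) = c.g (span K₁ {x}) := gsmularg (g := c.g) hlam x
    have hgsb : c.g (span K₁ {lam • c.b}) = c.g (span K₁ {c.b}) := gsmularg (g := c.g) hlam c.b
    have hsxbot : c.g (span K₁ {lam • x}) ≠ ⊥ := by rw [hgsx]; exact hxbot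
    have hsbbot : c.g (span K₁ {lam • c.b}) ≠ ⊥ := by rw [hgsb]; exact c.gbNeBot
    obtain ⟨w2, hl2⟩ := c.lift_exists (lam • x)
    have hw2mem : w2 ∈ span K₂ {wx} := by
      have := hl2.1
      rwa [hgsx, hgx] at this
    rcases mem_span_singleton.1 hw2mem with ⟨e, he⟩
    have hxb : c.g (span K₁ {x}) ≠ c.g (span K₁ {c.b}) := hxa ▸ c.gab_ne
    have hnexb : c.g (span K₁ {lam • x}) ≠ c.g (span K₁ {lam • c.b}) := by
      rw [hgsx, hgsb]; exact hxb
    have hwxβ : wx ∉ span K₂ {c.β} := fun hm => hxb (by rw [hgx, spanEq hm hwx0, ← c.hb])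
    have hpair := c.pairG hl2 hlb hsxbot hsbbot hnexb
    have heqs : lam • x + lam • c.b = lam • (x + c.b) := (smul_add _ _ _).symm
    rw [heqs, gsmularg (g := c.g) hlam] at hpair
    have heq2 : x + c.b = c.b + x := by abel
    rw [heq2] at hpair
    have i2 : Indep2 K₂ c.β wx := Indep2.mk' c.hβ hwxβ
    have hbx : c.g (span K₁ {c.b + x}) = span K₂ {c.β + wx} :=
      gpoint c.hbot c.hatom (hx.2.2 hxa) i2.add_ne
    rw [hbx] at hpair
    rcases mem_span_singleton.1 hpair with ⟨d, hd⟩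
    have hcomb : d • c.β + d • wx = cc • c.β + e • wx := by
      have h1 : d • c.β + d • wx = w2 + cc • c.β := by rw [← smul_add]; exact hd
      rw [h1, ← he]; abel
    obtain ⟨hd1, hd2⟩ := i2.coeff_eq hcomb
    have hw2 : w2 = cc • wx := by rw [← he, ← hd2, hd1]
    rwa [hw2] at hl2
  · exact c.smulLift₁ hx hxbot hxa hlam hca

end Ctx

section Extract

variable {K₁ K₂ E₁ E₂ : Type*}
  [DivisionRing K₁] [DivisionRing K₂] [AddCommGroup E₁] [Module K₁ E₁]
  [AddCommGroup E₂] [Module K₂ E₂]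
  {g : Submodule K₁ E₁ → Submodule K₂ E₂}

theorem exv (hjoin : ∀ s : Set (Submodule K₁ E₁), g (sSup s) = sSup (g '' s))
    {P : Submodule K₁ E₁} {q : Submodule K₂ E₂} (h : ¬ g P ≤ q) :
    ∃ v ∈ P, ¬ g (span K₁ {v}) ≤ q := by
  by_contra hc
  push_neg at hc
  apply h
  have hP : P = sSup ((fun v => span K₁ {v}) '' (P : Set E₁)) := by
    apply le_antisymm
    · intro v hv
      have hle : span K₁ {v} ≤ sSup ((fun v => span K₁ {v}) '' (P : Set E₁)) :=
        le_sSup (Set.mem_image_of_mem (fun v => span K₁ {v}) hv)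
      exact hle (mem_span_singleton_self v)
    · exact sSup_le (by rintro _ ⟨v, hv, rfl⟩; exact (span_singleton_le_iff_mem _ _).2 hv)
  rw [hP, hjoin]
  apply sSup_le
  rintro _ ⟨_, ⟨v, hv, rfl⟩, rfl⟩
  exact hc v hv

end Extract

end FTPG

open FTPG Submodule in
/-- A join-preserving map `g` between subspace lattices of vector spaces over division
rings, sending atoms to atoms or `0`, whose image has length `≥ 3`, is induced by a
semilinear map `f`, i.e. `g(Kv) = K f(v)` for all `v`. -/
theorem induced_by_semilinear_map {K₁ K₂ E₁ E₂ : Type*}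
    [DivisionRing K₁] [DivisionRing K₂] [AddCommGroup E₁] [Module K₁ E₁]
    [AddCommGroup E₂] [Module K₂ E₂]
    (g : Submodule K₁ E₁ → Submodule K₂ E₂)
    (hjoin : ∀ s : Set (Submodule K₁ E₁), g (sSup s) = sSup (g '' s))
    (hatom : ∀ p : Submodule K₁ E₁, IsAtom p → IsAtom (g p) ∨ g p = ⊥)
    (hlen : ∃ a b c d : Submodule K₂ E₂, a ∈ Set.range g ∧ b ∈ Set.range g ∧
      c ∈ Set.range g ∧ d ∈ Set.range g ∧ a < b ∧ b < c ∧ c < d) :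
    ∃ (σ : K₁ →+* K₂) (f : E₁ →ₛₗ[σ] E₂),
      ∀ v : E₁, g (Submodule.span K₁ {v}) = Submodule.span K₂ {f v} := by
  classical
  have hbot : g ⊥ = ⊥ := by simpa using hjoin ∅
  have hsup : ∀ p q, g (p ⊔ q) = g p ⊔ g q := by
    intro p q
    have := hjoin {p, q}
    rwa [sSup_pair, Set.image_pair, sSup_pair] at this
  have hatomv : ∀ v : E₁, v ≠ 0 → IsAtom (g (span K₁ {v})) ∨ g (span K₁ {v}) = ⊥ :=
    fun v hv => hatom _ (nonzero_span_atom v hv)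
  obtain ⟨A', B', C', D', ⟨PA, hPA⟩, ⟨PB, hPB⟩, ⟨PC, hPC⟩, ⟨PD, hPD⟩, h12, h23, h34⟩ := hlen
  -- extract three suitable image points
  obtain ⟨v₁, hv₁P, hv₁⟩ := exv hjoin (show ¬ g PB ≤ A' by rw [hPB]; exact not_le_of_gt h12)
  obtain ⟨v₂, hv₂P, hv₂⟩ := exv hjoin (show ¬ g PC ≤ B' by rw [hPC]; exact not_le_of_gt h23)
  obtain ⟨v₃, hv₃P, hv₃⟩ := exv hjoin (show ¬ g PD ≤ C' by rw [hPD]; exact not_le_of_gt h34)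
  have hle₁ : g (span K₁ {v₁}) ≤ B' := by
    rw [← hPB]; exact gmono hsup ((span_singleton_le_iff_mem _ _).2 hv₁P)
  have hle₂ : g (span K₁ {v₂}) ≤ C' := by
    rw [← hPC]; exact gmono hsup ((span_singleton_le_iff_mem _ _).2 hv₂P)
  have hv₁ne : g (span K₁ {v₁}) ≠ ⊥ := fun hb => hv₁ (hb ▸ bot_le)
  have hv₂ne : g (span K₁ {v₂}) ≠ ⊥ := fun hb => hv₂ (hb ▸ bot_le)
  have hv₃ne : g (span K₁ {v₃}) ≠ ⊥ := fun hb => hv₃ (hb ▸ bot_le)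
  obtain ⟨w₁, hw₁mem, hw₁0⟩ := (Submodule.ne_bot_iff _).1 hv₁ne
  obtain ⟨w₂, hw₂mem, hw₂0⟩ := (Submodule.ne_bot_iff _).1 hv₂ne
  obtain ⟨w₃, hw₃mem, hw₃0⟩ := (Submodule.ne_bot_iff _).1 hv₃ne
  have hgv₁ : g (span K₁ {v₁}) = span K₂ {w₁} := gpoint hbot hatomv hw₁mem hw₁0
  have hgv₂ : g (span K₁ {v₂}) = span K₂ {w₂} := gpoint hbot hatomv hw₂mem hw₂0
  have hgv₃ : g (span K₁ {v₃}) = span K₂ {w₃} := gpoint hbot hatomv hw₃mem hw₃0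
  have hw₂i : w₂ ∉ span K₂ {w₁} := by
    intro hm
    apply hv₂
    rw [hgv₂]
    exact le_trans ((span_singleton_le_iff_mem _ _).2 hm) (le_trans (hgv₁ ▸ le_refl _) hle₁)
  have hw₃i : w₃ ∉ span K₂ {w₁, w₂} := by
    intro hm
    apply hv₃
    rw [hgv₃]
    have hsub : span K₂ {w₁, w₂} ≤ C' := by
      apply spanPairLe
      · exact h23.le (hle₁ hw₁mem)
      · exact hle₂ hw₂mem
    exact le_trans ((span_singleton_le_iff_mem _ _).2 hm) hsub
  -- the second base point
  obtain ⟨β, hβmem, hβrel⟩ := stepEx hbot hsup hatomv hgv₁ hgv₂ hw₁0 hw₂i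
  have hβ0 : β ≠ 0 := stepNe0 hbot hsup hatomv hgv₁ hgv₂ hw₁0 hw₂i hβmem hβrel
  have hgb : g (span K₁ {v₂}) = span K₂ {β} := gpoint hbot hatomv hβmem hβ0
  have hβα : β ∉ span K₂ {w₁} := by
    intro hm
    apply hw₂i
    have hβw₂ : β ∈ span K₂ {w₂} := by rwa [hgv₂] at hβmem
    exact memTrans (flipMem hβw₂ hβ0) hm
  set c : Ctx K₁ K₂ E₁ E₂ :=
    { g := g, hbot := hbot, hsup := hsup, hatom := hatomv,
      a := v₁, b := v₂, α := w₁, β := β,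
      ha := hgv₁, hb := hgb, hα := hw₁0, hβ := hβ0, hβα := hβα, hab := hβrel,
      u₁ := v₁, u₂ := v₂, u₃ := v₃, w₁ := w₁, w₂ := w₂, w₃ := w₃,
      hu₁ := hgv₁, hu₂ := hgv₂, hu₃ := hgv₃,
      hw₁ := hw₁0, hw₂ := hw₂i, hw₃ := hw₃i } with hc
  choose F hF using c.lift_exists
  have hσex : ∀ lam : K₁, ∃ cc : K₂, c.IsLift (lam • c.a) (cc • c.α) := by
    intro lam
    by_cases hl : lam = 0
    · refine ⟨0, ?_⟩
      rw [hl, zero_smul, zero_smul]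
      exact c.liftBot (gzero c.hbot)
    · obtain ⟨w, hw⟩ := c.lift_exists (lam • c.a)
      have hmem := hw.1
      rw [gsmularg (g := c.g) hl c.a, c.ha] at hmem
      rcases mem_span_singleton.1 hmem with ⟨cc, hcc⟩
      exact ⟨cc, by rw [hcc]; exact hw⟩
  choose σ0 hσ using hσex
  have hσu : ∀ (lam : K₁) (cc : K₂), c.IsLift (lam • c.a) (cc • c.α) → cc = σ0 lam := by
    intro lam cc hcc
    have heq := c.lift_unique hcc (hσ lam)
    have h0 : (cc - σ0 lam) • c.α = 0 := by rw [sub_smul, heq, sub_self]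
    by_contra hne
    exact c.hα (smul_cancel0 (sub_ne_zero.2 hne) h0)
  have hσ1 : σ0 1 = 1 := (hσu 1 1 (by rw [one_smul, one_smul]; exact c.lift_a)).symm
  have hσzero : σ0 0 = 0 :=
    (hσu 0 0 (by rw [zero_smul, zero_smul]; exact c.liftBot (gzero c.hbot))).symm
  have hσadd : ∀ l m, σ0 (l + m) = σ0 l + σ0 m := by
    intro l m
    refine (hσu _ _ ?_).symm
    rw [add_smul, add_smul]
    exact c.addLift (hσ l) (hσ m)
  have hσmul : ∀ l m, σ0 (l * m) = σ0 l * σ0 m := by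
    intro l m
    refine (hσu _ _ ?_).symm
    rw [mul_smul, mul_smul]
    exact c.smulLift (hσ m) (hσ l)
  have hFadd : ∀ x y, F (x + y) = F x + F y :=
    fun x y => c.lift_unique (hF (x + y)) (c.addLift (hF x) (hF y))
  have hFsmul : ∀ (l : K₁) (x : E₁), F (l • x) = σ0 l • F x :=
    fun l x => c.lift_unique (hF _) (c.smulLift (hF x) (hσ l))
  let σ : K₁ →+* K₂ :=
    { toFun := σ0, map_one' := hσ1, map_mul' := hσmul,
      map_zero' := hσzero, map_add' := hσadd }
  let f : E₁ →ₛₗ[σ] E₂ := { toFun := F, map_add' := hFadd, map_smul' := hFsmul }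
  refine ⟨σ, f, fun v => ?_⟩
  by_cases hv : g (span K₁ {v}) = ⊥
  · have hz : F v = 0 := c.lift_eq_zero hv (hF v)
    show g (span K₁ {v}) = span K₂ {F v}
    rw [hz, span_zero_singleton]
    exact hv
  · exact c.lift_point hv (hF v)
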